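/- The vectors x₁ = (1,0,0), x₂ = (−1/6, 5/12, 5/12), x₃ = (−1/6, −5/12, 5/12), x₄ = (−1/6, 5/12, −5/12), x₅ = (−1/6, −5/12, −5/12) in ℓ₁³, with functionals x₁* = (1,0,0), x₂* = (−1,1,1), x₃* = (−1,−1,1), x₄* = (−1,1,−1), x₅* = (−1,−1,−1) in ℓ_∞³, form a FUNTF of length 5 for ℓ₁³: each pair satisfies ‖x_j‖₁ = ‖x_j*‖_∞ = x_j*(x_j) = 1 and Σ_{j=1}^5 x_j* ⊗ x_j = (5/3)I. -/

import Mathlib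

open scoped BigOperators

/-- The duality pairing between `ℓ_∞³` and `ℓ₁³`. -/
noncomputable def pair3 (f : PiLp ⊤ (fun _ : Fin 3 => ℝ))
    (v : PiLp 1 (fun _ : Fin 3 => ℝ)) : ℝ :=
  ∑ i, (WithLp.equiv ⊤ (Fin 3 → ℝ) f) i * (WithLp.equiv 1 (Fin 3 → ℝ) v) i

noncomputable def xv3 : Fin 5 → PiLp 1 (fun _ : Fin 3 => ℝ) := fun j =>
  (WithLp.equiv 1 (Fin 3 → ℝ)).symm
    (![![1, 0, 0],
       ![-(1/6), 5/12, 5/12],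
       ![-(1/6), -(5/12), 5/12],
       ![-(1/6), 5/12, -(5/12)],
       ![-(1/6), -(5/12), -(5/12)]] j)

noncomputable def xf3 : Fin 5 → PiLp ⊤ (fun _ : Fin 3 => ℝ) := fun j =>
  (WithLp.equiv ⊤ (Fin 3 → ℝ)).symm
    (![![1, 0, 0],
       ![-1, 1, 1],
       ![-1, -1, 1],
       ![-1, 1, -1],
       ![-1, -1, -1]] j)

/-- The explicit five vectors form a FUNTF of length 5 for `ℓ₁³`. -/
theorem funtf_length_five_ell1_three :
    (∀ j, ‖xv3 j‖ = 1) ∧ (∀ j, ‖xf3 j‖ = 1) ∧ (∀ j, pair3 (xf3 j) (xv3 j) = 1) ∧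
    (∀ v : PiLp 1 (fun _ : Fin 3 => ℝ),
      ∑ j, pair3 (xf3 j) v • xv3 j = (5/3 : ℝ) • v) := by
  refine ⟨?_, ?_, ?_, ?_⟩
  · intro j
    fin_cases j <;>
      simp [xv3, PiLp.norm_eq_sum, PiLp.norm_eq_of_L1, Fin.sum_univ_three, WithLp.equiv_symm_apply] <;>
      norm_num [abs_of_nonneg]
  · intro j
    fin_cases j <;>
      simp [xf3, PiLp.norm_eq_ciSup, WithLp.equiv_symm_apply] <;>
      · apply le_antisymm
        · apply ciSup_le; intro i; fin_cases i <;> norm_num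
        · exact le_trans (by norm_num) (le_ciSup (Set.finite_range _).bddAbove 0)
  · intro j
    fin_cases j <;>
      norm_num [pair3, xf3, xv3, Fin.sum_univ_three, Matrix.cons_val_two]
  · intro v
    ext i
    simp only [Finset.sum_apply, PiLp.smul_apply, smul_eq_mul]
    rw [Fin.sum_univ_five]
    fin_cases i <;> · norm_num [pair3, xf3, xv3, Fin.sum_univ_three, Matrix.cons_val_two, Matrix.cons_val_three, Matrix.cons_val_four]; ring_nf <;> rfl
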